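/- Let n be a positive natural number, let M be the n×n real matrix whose entry in row j and column l (1 ≤ j, l ≤ n) equals min(j,l) if l ≤ n-1 and j/2 if l = n, and let v be the vector in ℝ^n with j-th entry sin(jπ/(2n)) for 1 ≤ j ≤ n (so the n-th entry is 1). Then M·v = μ·v, where μ = 1/(4·sin²(π/(4n))). -/

import Mathlib

/-!
Extend the rows of `M v` to a sequence `w j`, `j ∈ ℕ`. In `j`, the entry `min j l` has second
difference `-δ_{jl}` and `j / 2` is linear, so `w (j+1) - 2 w j + w (j-1) = -v j` for `0 < j < n`,
while `w 0 = 0` and `w n - w (n-1) = v n / 2`. With `θ = π / (2n)` the sequence `μ sin (jθ)`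
satisfies the same relations, since
`sin ((j+1)θ) - 2 sin (jθ) + sin ((j-1)θ) = -4 sin² (θ/2) sin (jθ)`
and `1 - cos θ = 2 sin² (θ/2)`. The difference of the two sequences is therefore affine on
`[0, n]` with zero value at `0` and zero slope, hence zero.
-/

open Finset Real

lemma one_sub_cos_eq_two_mul_sin_sq (θ : ℝ) : 1 - cos θ = 2 * sin (θ / 2) ^ 2 := by
  have := cos_sq_add_sin_sq (θ / 2)
  rw [show θ = 2 * (θ / 2) by ring, cos_two_mul]
  simp only [show 2 * (θ / 2) / 2 = θ / 2 by ring]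
  linarith

lemma sin_nat_mul_second_diff (θ : ℝ) (j : ℕ) :
    sin ((j + 2 : ℕ) * θ) - 2 * sin ((j + 1 : ℕ) * θ) + sin (j * θ)
      = -(4 * sin (θ / 2) ^ 2) * sin ((j + 1 : ℕ) * θ) := by
  have hadd := sin_add ((j + 1 : ℕ) * θ) θ
  have hsub := sin_sub ((j + 1 : ℕ) * θ) θ
  rw [show ((j + 1 : ℕ) : ℝ) * θ + θ = (j + 2 : ℕ) * θ by push_cast; ring] at hadd
  rw [show ((j + 1 : ℕ) : ℝ) * θ - θ = j * θ by push_cast; ring] at hsub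
  rw [hadd, hsub, show 4 * sin (θ / 2) ^ 2 = 2 * (1 - cos θ) by
    rw [one_sub_cos_eq_two_mul_sin_sq]; ring]
  ring

section SecondDifference

variable {R : Type*} [CommRing R] {u : ℕ → R} {n : ℕ}

lemma affine_of_second_diff_eq_zero
    (h : ∀ j, j + 2 ≤ n → u (j + 2) - 2 * u (j + 1) + u j = 0) :
    ∀ j ≤ n, u j = u 0 + j * (u 1 - u 0) := by
  intro j
  induction j using Nat.twoStepInduction with
  | zero => simp
  | one => simp
  | more j ih₀ ih₁ =>
    intro hj
    have h₁ := ih₁ (by omega)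
    push_cast at h₁ ⊢
    linear_combination h j hj - ih₀ (by omega) + 2 * h₁

lemma eq_zero_of_second_diff_eq_zero (hn : 0 < n) (h₀ : u 0 = 0) (hlast : u n = u (n - 1))
    (h : ∀ j, j + 2 ≤ n → u (j + 2) - 2 * u (j + 1) + u j = 0) :
    ∀ j ≤ n, u j = 0 := by
  have haff := affine_of_second_diff_eq_zero h
  have hslope : u 1 - u 0 = 0 := by
    have := haff n le_rfl
    rw [hlast, haff (n - 1) (Nat.sub_le n 1), Nat.cast_sub hn, Nat.cast_one] at this
    linear_combination -this
  intro j hj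
  rw [haff j hj, hslope, h₀]
  ring

end SecondDifference

/-- The entry of Bürgi's matrix in row `j` and column `l`, with 1-based indices and `j` allowed to
range over all of `ℕ`. -/
noncomputable def buergiKernel (n j l : ℕ) : ℝ := if l < n then min (j : ℝ) l else j / 2

noncomputable def buergiRow (n : ℕ) (s : ℕ → ℝ) (j : ℕ) : ℝ :=
  ∑ l ∈ range n, buergiKernel n j (l + 1) * s (l + 1)

lemma buergiKernel_zero_left (n l : ℕ) : buergiKernel n 0 l = 0 := by
  simp [buergiKernel]

lemma buergiKernel_second_diff {n j : ℕ} (hj : j + 1 < n) (l : ℕ) :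
    buergiKernel n (j + 2) l - 2 * buergiKernel n (j + 1) l + buergiKernel n j l
      = if l = j + 1 then -1 else 0 := by
  unfold buergiKernel
  split_ifs with hl hjl
  · subst hjl
    push_cast
    rw [min_eq_right (by linarith), min_eq_right le_rfl, min_eq_left (by linarith)]
    ring
  · push_cast
    rcases Nat.lt_or_ge l (j + 1) with hlt | hge
    · have : (l : ℝ) + 1 ≤ j + 1 := by exact_mod_cast hlt
      rw [min_eq_right (by linarith), min_eq_right (by linarith), min_eq_right (by linarith)]
      ring
    · have : (j : ℝ) + 2 ≤ l := by exact_mod_cast (show j + 2 ≤ l by omega)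
      rw [min_eq_left (by linarith), min_eq_left (by linarith), min_eq_left (by linarith)]
      ring
  · omega
  · push_cast; ring

lemma buergiKernel_succ_sub_self (m l : ℕ) :
    buergiKernel (m + 1) (m + 1) l - buergiKernel (m + 1) m l = if l ≤ m then 0 else 1 / 2 := by
  unfold buergiKernel
  split_ifs with hl hlm hlm <;> try omega
  · have : (l : ℝ) ≤ m := by exact_mod_cast hlm
    push_cast
    rw [min_eq_right (by linarith), min_eq_right this, sub_self]
  · push_cast; ring

lemma buergiRow_zero (n : ℕ) (s : ℕ → ℝ) : buergiRow n s 0 = 0 := by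
  simp [buergiRow, buergiKernel_zero_left]

lemma buergiRow_second_diff {n j : ℕ} (s : ℕ → ℝ) (hj : j + 1 < n) :
    buergiRow n s (j + 2) - 2 * buergiRow n s (j + 1) + buergiRow n s j = -s (j + 1) := by
  simp only [buergiRow, mul_sum, ← sum_sub_distrib, ← sum_add_distrib]
  have hterm : ∀ l ∈ range n, buergiKernel n (j + 2) (l + 1) * s (l + 1)
      - 2 * (buergiKernel n (j + 1) (l + 1) * s (l + 1)) + buergiKernel n j (l + 1) * s (l + 1)
      = if j = l then -s (j + 1) else 0 := by
    intro l _
    rw [← mul_assoc, ← sub_mul, ← add_mul, buergiKernel_second_diff hj]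
    split_ifs <;> first | omega | (subst_vars; ring)
  rw [sum_congr rfl hterm, sum_ite_eq, if_pos (mem_range.2 (by omega))]

lemma buergiRow_last_sub {n : ℕ} (s : ℕ → ℝ) (hn : 0 < n) :
    buergiRow n s n - buergiRow n s (n - 1) = s n / 2 := by
  obtain ⟨m, rfl⟩ : ∃ m, n = m + 1 := ⟨n - 1, by omega⟩
  rw [Nat.add_sub_cancel, buergiRow, buergiRow, ← sum_sub_distrib]
  simp only [← sub_mul, buergiKernel_succ_sub_self, sum_range_succ]
  rw [sum_eq_zero fun l hl => by rw [if_pos (Nat.succ_le_of_lt (mem_range.1 hl)), zero_mul],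
    if_neg (by omega)]
  ring

lemma buergiRow_sin {n : ℕ} (hn : 0 < n) {j : ℕ} (hj : j ≤ n) :
    buergiRow n (fun l => sin (l * π / (2 * n))) j
      = 1 / (4 * sin (π / (4 * n)) ^ 2) * sin (j * π / (2 * n)) := by
  set θ := π / (2 * n) with hθ
  have hn' : (0 : ℝ) < n := by exact_mod_cast hn
  simp only [mul_div_assoc, ← hθ, show π / (4 * n) = θ / 2 by rw [hθ]; field_simp; ring]
  set μ := 1 / (4 * sin (θ / 2) ^ 2)
  have hsin_half_pos : 0 < sin (θ / 2) := by
    apply sin_pos_of_pos_of_lt_pi (by positivity)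
    rw [hθ, div_div, div_lt_iff₀ (by positivity)]
    nlinarith [pi_pos, (show (1 : ℝ) ≤ n by exact_mod_cast hn)]
  have hμ : μ * (4 * sin (θ / 2) ^ 2) = 1 := one_div_mul_cancel (by positivity)
  have hnθ : (n : ℝ) * θ = π / 2 := by rw [hθ]; field_simp
  have h := eq_zero_of_second_diff_eq_zero (u := fun j => buergiRow n (fun l => sin (l * θ)) j
    - μ * sin (j * θ)) hn ?_ ?_ ?_ j hj
  · exact sub_eq_zero.1 h
  · simp [buergiRow_zero]
  · have hlast := buergiRow_last_sub (fun l => sin (l * θ)) hn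
    have hprev : sin ((n - 1 : ℕ) * θ) = cos θ := by
      rw [Nat.cast_sub hn, Nat.cast_one, sub_mul, one_mul, hnθ, sin_pi_div_two_sub]
    simp only [hnθ, sin_pi_div_two] at hlast ⊢
    rw [hprev]
    linear_combination hlast - μ * one_sub_cos_eq_two_mul_sin_sq θ - (1 / 2 : ℝ) * hμ
  · intro j hj
    have := buergiRow_second_diff (fun l => sin (l * θ)) (show j + 1 < n by omega)
    linear_combination this - μ * sin_nat_mul_second_diff θ j + sin ((j + 1 : ℕ) * θ) * hμ

/-- The sine vector `v j = sin(jπ/(2n))` (1-based) is an eigenvector of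
Bürgi's matrix `M` with eigenvalue `μ = 1/(4·sin²(π/(4n)))`. -/
theorem buergi_sine_eigenvector (n : ℕ) (hn : 0 < n)
    (M : Matrix (Fin n) (Fin n) ℝ)
    (hM : ∀ j l : Fin n, M j l =
      if (l : ℕ) + 1 ≤ n - 1 then (min ((j : ℕ) + 1) ((l : ℕ) + 1) : ℝ)
      else ((j : ℕ) + 1 : ℝ) / 2)
    (v : Fin n → ℝ)
    (hv : ∀ j : Fin n, v j = Real.sin ((((j : ℕ) + 1 : ℕ) : ℝ) * Real.pi / (2 * n))) :
    M.mulVec v = (1 / (4 * (Real.sin (Real.pi / (4 * n))) ^ 2)) • v := by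
  ext j
  have hrow : M.mulVec v j = buergiRow n (fun l => sin (l * π / (2 * n))) (j + 1) := by
    rw [Matrix.mulVec, dotProduct, buergiRow, ← Fin.sum_univ_eq_sum_range
      (fun l : ℕ => buergiKernel n (j + 1) (l + 1) * sin ((l + 1 : ℕ) * π / (2 * n)))]
    refine sum_congr rfl fun l _ => ?_
    simp only [hM, hv, buergiKernel, show (l : ℕ) + 1 ≤ n - 1 ↔ (l : ℕ) + 1 < n by omega]
    push_cast
    rfl
  rw [hrow, buergiRow_sin hn j.isLt, Pi.smul_apply, smul_eq_mul, hv]
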